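/- Let (ℒ, ℒ̄) be a Toda Lax pair in the standard gauge and φ : ℤ → ℂ such that the constraint of type B, (T − T†)ℒ̄ = ℒ†(T − T†), holds. Then for every integer k ≥ 1 the following matrix identity holds: (T − T†)B̄_k − B_k†(T − T†) = −((ℒ†)^k)_{−1} T + T (ℒ̄^k)_{−1} − Φ_k T† + T† Φ̄_k. -/

import Mathlib

/-- Pseudo-difference operators modeled as ℤ×ℤ matrices over ℂ. -/
abbrev PDO := ℤ → ℤ → ℂ

/-- Entrywise matrix product `(MN)(n,m) = Σ_k M(n,k) N(k,m)` (a `tsum`;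
it reduces to a finite sum whenever the supports make it finitely supported). -/
noncomputable def pmul (M N : PDO) : PDO := fun n m => ∑' k : ℤ, M n k * N k m

/-- The adjoint: `(M†)(n,m) = M(m,n)`. -/
def padj (M : PDO) : PDO := fun n m => M m n

/-- Matrix powers, with `ppow M 0` the identity matrix. -/
noncomputable def ppow (M : PDO) : ℕ → PDO
  | 0 => fun n m => if n = m then 1 else 0
  | k + 1 => pmul (ppow M k) M

/-- `(M)_{>0}`: the strictly upper-triangular (positive-diagonal) part. -/
def pplus (M : PDO) : PDO := fun n m => if n < m then M n m else 0

/-- `(M)_{<0}`: the strictly lower-triangular (negative-diagonal) part. -/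
def pminus (M : PDO) : PDO := fun n m => if m < n then M n m else 0

/-- `(M)_0`: the diagonal part. -/
def pzero (M : PDO) : PDO := fun n m => if n = m then M n m else 0

/-- `(M)_j`: the j-th diagonal part, with `(n, n+j)` entry `M(n, n+j)`. -/
def pdiag (j : ℤ) (M : PDO) : PDO := fun n m => if m = n + j then M n m else 0

/-- The shift matrix Λ: entries 1 iff `m = n+1`. -/
def shiftΛ : PDO := fun n m => if m = n + 1 then 1 else 0

/-- The inverse shift matrix Λ⁻¹ (transpose of Λ): entries 1 iff `m = n-1`. -/
def shiftΛinv : PDO := fun n m => if m = n - 1 then 1 else 0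

/-- Matrix `T` with entries `T(n,m) = e^{-φ(n)}` if `m = n+1`, else 0. -/
noncomputable def Tmat (φ : ℤ → ℂ) : PDO :=
  fun n m => if m = n + 1 then Complex.exp (-(φ n)) else 0

/-- A Toda Lax pair in the standard gauge: `L` is of lower type with
`L(n,m) = 0` for `m > n+1` and `L(n,n+1) = 1`; `L̄` is of upper type with
`L̄(n,m) = 0` for `m < n-1`. -/
def IsStandardPair (L Lb : PDO) : Prop :=
  (∀ n m : ℤ, n + 1 < m → L n m = 0) ∧ (∀ n : ℤ, L n (n + 1) = 1) ∧
  (∀ n m : ℤ, m < n - 1 → Lb n m = 0)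

/-- `B_k = (L^k)_{>0}`. -/
noncomputable def Bop (L : PDO) (k : ℕ) : PDO := pplus (ppow L k)

/-- `Φ_k = (L^k)_0`. -/
noncomputable def Phiop (L : PDO) (k : ℕ) : PDO := pzero (ppow L k)

/-- `B̄_k = (L̄^k)_{<0}`. -/
noncomputable def Bbarop (Lb : PDO) (k : ℕ) : PDO := pminus (ppow Lb k)

/-- `Φ̄_k = (L̄^k)_0`. -/
noncomputable def Phibarop (Lb : PDO) (k : ℕ) : PDO := pzero (ppow Lb k)

/-!
Write `A = T - T†`. The constraint `A ℒ̄ = ℒ† A` propagates by induction to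
`A ℒ̄^k = (ℒ†)^k A`; this only needs associativity of products of matrices of upper type.
Since `B_k† = ((ℒ†)^k)_{<0}` and `A` lives on the diagonals `±1`, taking strictly lower parts
commutes with multiplication by `A` except at entries next to the main diagonal, and these
produce the four boundary terms.
-/

/-- A matrix is of upper type iff it satisfies `LowerBandwidthLE N` for some `N`. -/
def LowerBandwidthLE (N : ℕ) (M : PDO) : Prop := ∀ n m : ℤ, m + N < n → M n m = 0

theorem LowerBandwidthLE.pmul {a b : ℕ} {P Q : PDO} (hP : LowerBandwidthLE a P)
    (hQ : LowerBandwidthLE b Q) : LowerBandwidthLE (a + b) (pmul P Q) := by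
  intro n m h
  refine (tsum_congr fun k => ?_).trans tsum_zero
  rcases lt_or_ge (k + a) n with hk | hk
  · rw [hP n k hk, zero_mul]
  · rw [hQ k m (by push_cast at h; omega), mul_zero]

theorem ppow_zero_pmul (M N : PDO) : pmul (ppow M 0) N = N := by
  funext n m
  refine (tsum_eq_single n fun k hk => ?_).trans ?_ <;> simp [ppow, Ne.symm, *]

theorem pmul_ppow_zero (M N : PDO) : pmul N (ppow M 0) = N := by
  funext n m
  refine (tsum_eq_single m fun k hk => ?_).trans ?_ <;> simp [ppow, *]

theorem LowerBandwidthLE.ppow {a : ℕ} {M : PDO} (hM : LowerBandwidthLE a M) :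
    ∀ k : ℕ, LowerBandwidthLE (k * a) (ppow M k)
  | 0 => fun n m h => if_neg (by omega)
  | k + 1 => by rw [Nat.succ_mul]; exact (LowerBandwidthLE.ppow hM k).pmul hM

/-- `pmul` is a `tsum`, so it is associative only where the triple sums are finite, as they are
for matrices of upper type. -/
theorem pmul_assoc_of_lowerBandwidthLE {a b c : ℕ} {P Q R : PDO} (hP : LowerBandwidthLE a P)
    (hQ : LowerBandwidthLE b Q) (hR : LowerBandwidthLE c R) :
    pmul (pmul P Q) R = pmul P (pmul Q R) := by
  funext n m
  have hsum : Summable (Function.uncurry fun i j => P n j * Q j i * R i m) := by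
    refine summable_of_ne_finset_zero
      (s := Finset.Icc (n - a - b) (m + c) ×ˢ Finset.Icc (n - a) (m + b + c)) ?_
    rintro ⟨i, j⟩ hij
    simp only [Finset.mem_product, Finset.mem_Icc] at hij
    rcases lt_or_ge (j + a) n with hj | hj
    · simp [hP n j hj]
    rcases lt_or_ge (i + b) j with hi | hi
    · simp [hQ j i hi]
    · simp [hR i m (by omega)]
  simp only [pmul, ← tsum_mul_right, ← tsum_mul_left, ← mul_assoc]
  exact hsum.tsum_comm.symm

theorem pmul_ppow_comm {a : ℕ} {M : PDO} (hM : LowerBandwidthLE a M) :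
    ∀ k : ℕ, pmul M (ppow M k) = pmul (ppow M k) M
  | 0 => by rw [ppow_zero_pmul, pmul_ppow_zero]
  | k + 1 => by
    change pmul M (pmul (ppow M k) M) = pmul (pmul (ppow M k) M) M
    rw [← pmul_assoc_of_lowerBandwidthLE hM (hM.ppow k) hM, pmul_ppow_comm hM k]

theorem padj_pmul (M N : PDO) : padj (pmul M N) = pmul (padj N) (padj M) :=
  funext₂ fun _ _ => tsum_congr fun _ => mul_comm _ _

theorem padj_ppow {a : ℕ} {M : PDO} (hM : LowerBandwidthLE a (padj M)) :
    ∀ k : ℕ, ppow (padj M) k = padj (ppow M k)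
  | 0 => funext₂ fun _ _ => by simp [ppow, padj, eq_comm]
  | k + 1 => by
    change pmul (ppow (padj M) k) (padj M) = padj (pmul (ppow M k) M)
    rw [padj_pmul, ← padj_ppow hM k, pmul_ppow_comm hM]

theorem padj_pplus (M : PDO) : padj (pplus M) = pminus (padj M) := rfl

theorem pzero_padj (M : PDO) : pzero (padj M) = pzero M :=
  funext₂ fun n m => by unfold pzero padj; split_ifs with h <;> simp [h]

theorem pmul_ppow_eq_ppow_pmul {a b c : ℕ} {A X Y : PDO} (hA : LowerBandwidthLE a A)
    (hX : LowerBandwidthLE b X) (hY : LowerBandwidthLE c Y) (h : pmul A X = pmul Y A) :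
    ∀ k : ℕ, pmul A (ppow X k) = pmul (ppow Y k) A
  | 0 => by rw [ppow_zero_pmul, pmul_ppow_zero]
  | k + 1 => by
    change pmul A (pmul (ppow X k) X) = pmul (pmul (ppow Y k) Y) A
    rw [← pmul_assoc_of_lowerBandwidthLE hA (hX.ppow k) hX,
      pmul_ppow_eq_ppow_pmul hA hX hY h k,
      pmul_assoc_of_lowerBandwidthLE (hY.ppow k) hA hX, h,
      pmul_assoc_of_lowerBandwidthLE (hY.ppow k) hY hA]

section Tmat

variable (φ : ℤ → ℂ) (M : PDO) (n m : ℤ)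

theorem hasSum_Tmat_mul :
    HasSum (fun k => Tmat φ n k * M k m) (Complex.exp (-φ n) * M (n + 1) m) := by
  convert hasSum_single (n + 1) fun k hk => ?_ using 1
  · simp [Tmat]
  · simp [Tmat, hk]

theorem hasSum_padj_Tmat_mul :
    HasSum (fun k => padj (Tmat φ) n k * M k m) (Complex.exp (-φ (n - 1)) * M (n - 1) m) := by
  convert hasSum_single (n - 1) fun k hk => ?_ using 1
  · simp [Tmat, padj]
  · simp [Tmat, padj]; omega

theorem hasSum_mul_Tmat :
    HasSum (fun k => M n k * Tmat φ k m) (M n (m - 1) * Complex.exp (-φ (m - 1))) := by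
  convert hasSum_single (m - 1) fun k hk => ?_ using 1
  · simp [Tmat]
  · simp [Tmat]; omega

theorem hasSum_mul_padj_Tmat :
    HasSum (fun k => M n k * padj (Tmat φ) k m) (M n (m + 1) * Complex.exp (-φ m)) := by
  convert hasSum_single (m + 1) fun k hk => ?_ using 1
  · simp [Tmat, padj]
  · simp [Tmat, padj, hk]

theorem Tmat_sub_padj_pmul_apply :
    pmul (Tmat φ - padj (Tmat φ)) M n m
      = Complex.exp (-φ n) * M (n + 1) m - Complex.exp (-φ (n - 1)) * M (n - 1) m := by
  simpa only [pmul, Pi.sub_apply, sub_mul] using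
    ((hasSum_Tmat_mul φ M n m).sub (hasSum_padj_Tmat_mul φ M n m)).tsum_eq

theorem pmul_Tmat_sub_padj_apply :
    pmul M (Tmat φ - padj (Tmat φ)) n m
      = M n (m - 1) * Complex.exp (-φ (m - 1)) - M n (m + 1) * Complex.exp (-φ m) := by
  simpa only [pmul, Pi.sub_apply, mul_sub] using
    ((hasSum_mul_Tmat φ M n m).sub (hasSum_mul_padj_Tmat φ M n m)).tsum_eq

theorem lowerBandwidthLE_Tmat_sub_padj : LowerBandwidthLE 1 (Tmat φ - padj (Tmat φ)) := by
  intro n m h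
  simp only [Pi.sub_apply, Tmat, padj]
  rw [if_neg (by omega), if_neg (by omega), sub_zero]

theorem Tmat_sub_padj_pmul_pminus {X Y : PDO}
    (h : pmul (Tmat φ - padj (Tmat φ)) X = pmul Y (Tmat φ - padj (Tmat φ))) :
    pmul (Tmat φ - padj (Tmat φ)) (pminus X) - pmul (pminus Y) (Tmat φ - padj (Tmat φ))
      = -(pmul (pdiag (-1) Y) (Tmat φ)) + pmul (Tmat φ) (pdiag (-1) X)
        - pmul (pzero Y) (padj (Tmat φ)) + pmul (padj (Tmat φ)) (pzero X) := by
  funext n m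
  have hnm := congrFun₂ h n m
  rw [Tmat_sub_padj_pmul_apply, pmul_Tmat_sub_padj_apply] at hnm
  simp only [Pi.sub_apply, Pi.add_apply, Pi.neg_apply, Tmat_sub_padj_pmul_apply,
    pmul_Tmat_sub_padj_apply]
  simp only [pmul, (hasSum_Tmat_mul φ _ n m).tsum_eq, (hasSum_mul_Tmat φ _ n m).tsum_eq,
    (hasSum_padj_Tmat_mul φ _ n m).tsum_eq, (hasSum_mul_padj_Tmat φ _ n m).tsum_eq]
  simp only [pminus, pdiag, pzero]
  -- below the diagonal `m = n - 1` the projections act as the identity and the entry is `hnm`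
  split_ifs <;> first | omega | linear_combination hnm | ring1

end Tmat

/-- identity (4.c4) for the negative projections under the
constraint of type B. -/
theorem typeB_negative_projection_identity
    (L Lb : PDO) (φ : ℤ → ℂ)
    (hpair : IsStandardPair L Lb)
    (hconstr : pmul (Tmat φ - padj (Tmat φ)) Lb
      = pmul (padj L) (Tmat φ - padj (Tmat φ))) :
    ∀ k : ℕ, 1 ≤ k →
      pmul (Tmat φ - padj (Tmat φ)) (Bbarop Lb k)
        - pmul (padj (Bop L k)) (Tmat φ - padj (Tmat φ))
      = -(pmul (pdiag (-1) (ppow (padj L) k)) (Tmat φ))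
        + pmul (Tmat φ) (pdiag (-1) (ppow Lb k))
        - pmul (Phiop L k) (padj (Tmat φ))
        + pmul (padj (Tmat φ)) (Phibarop Lb k) := by
  obtain ⟨hL, -, hLb⟩ := hpair
  intro k _
  have hLadjBand : LowerBandwidthLE 1 (padj L) := fun n m h => hL m n (by omega)
  have hLbBand : LowerBandwidthLE 1 Lb := fun n m h => hLb n m (by omega)
  have hpow := pmul_ppow_eq_ppow_pmul (lowerBandwidthLE_Tmat_sub_padj φ) hLbBand hLadjBand hconstr k
  rw [Bop, Phiop, padj_pplus, ← pzero_padj, ← padj_ppow hLadjBand]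
  exact Tmat_sub_padj_pmul_pminus φ hpow
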